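/- For a discrete memoryless channel with noisy feedback (channel p(y_i|x^i,y^{i-1}) = p(y_i|x_i), deterministic encoder X_i = f_i(W, Z^{i-1}), feedback Markov chain W − (Y^i,Z^{i-1}) − Z_i, W uniform on {1,...,M}), with single-letter capacity C = max_{p(x)} I(X;Y): any decoder Ŵ = g(Y^n) with error probability P_e = Pr(W ≠ Ŵ) satisfies log M ≤ 1 + P_e · log M + n·C − I(X^n → Y^n | W). -/
import Mathlib


open Finset

namespace NFB

variable {Ω : Type*} [Fintype Ω]

/-- Probability that the finite random variable `X` (on finite sample space `Ω`
with weights `μ`) takes the value `a`. -/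
noncomputable def pr (μ : Ω → ℝ) {α : Type*} [Fintype α] [DecidableEq α]
    (X : Ω → α) (a : α) : ℝ :=
  ∑ ω ∈ Finset.univ.filter (fun ω => X ω = a), μ ω

/-- Conditional probability `p(X = a | Y = b)`. -/
noncomputable def condpr (μ : Ω → ℝ) {α β : Type*} [Fintype α] [DecidableEq α]
    [Fintype β] [DecidableEq β] (X : Ω → α) (Y : Ω → β) (a : α) (b : β) : ℝ :=
  pr μ (fun ω => (X ω, Y ω)) (a, b) / pr μ Y b

/-- Shannon entropy (base 2) of a finite random variable. -/
noncomputable def ent (μ : Ω → ℝ) {α : Type*} [Fintype α] [DecidableEq α]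
    (X : Ω → α) : ℝ :=
  ∑ a : α, -(pr μ X a * Real.logb 2 (pr μ X a))

/-- Shannon entropy (base 2) of a distribution given directly as a weight function. -/
noncomputable def entD {γ : Type*} [Fintype γ] (p : γ → ℝ) : ℝ :=
  ∑ c : γ, -(p c * Real.logb 2 (p c))

/-- Binary entropy function (base 2). -/
noncomputable def binent (a : ℝ) : ℝ :=
  -(a * Real.logb 2 a) - ((1 - a) * Real.logb 2 (1 - a))

/-- Conditional entropy `H(X | Y)`. -/
noncomputable def condent (μ : Ω → ℝ) {α β : Type*} [Fintype α] [DecidableEq α]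
    [Fintype β] [DecidableEq β] (X : Ω → α) (Y : Ω → β) : ℝ :=
  ent μ (fun ω => (X ω, Y ω)) - ent μ Y

/-- Mutual information `I(X; Y)`. -/
noncomputable def mi (μ : Ω → ℝ) {α β : Type*} [Fintype α] [DecidableEq α]
    [Fintype β] [DecidableEq β] (X : Ω → α) (Y : Ω → β) : ℝ :=
  ent μ X + ent μ Y - ent μ (fun ω => (X ω, Y ω))

/-- Conditional mutual information `I(X; Y | Z)`. -/
noncomputable def cmi (μ : Ω → ℝ) {α β γ : Type*} [Fintype α] [DecidableEq α]
    [Fintype β] [DecidableEq β] [Fintype γ] [DecidableEq γ]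
    (X : Ω → α) (Y : Ω → β) (Z : Ω → γ) : ℝ :=
  condent μ X Z + condent μ Y Z - condent μ (fun ω => (X ω, Y ω)) Z

/-- The length-`i` prefix of a sequence `x : Fin n → α`. -/
def pfx {α : Type*} {n : ℕ} (x : Fin n → α) (i : ℕ) (h : i ≤ n) : Fin i → α :=
  fun j => x (Fin.castLE h j)

/-- Directed information `I(Xⁿ → Yⁿ) = ∑ᵢ I(Xⁱ; Yᵢ | Yⁱ⁻¹)`. -/
noncomputable def dirinfo (μ : Ω → ℝ) {α β : Type*} [Fintype α] [DecidableEq α]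
    [Fintype β] [DecidableEq β] {n : ℕ} (X : Ω → Fin n → α) (Y : Ω → Fin n → β) : ℝ :=
  ∑ i : Fin n, cmi μ (fun ω => pfx (X ω) (i.1 + 1) i.isLt)
    (fun ω => Y ω i) (fun ω => pfx (Y ω) i.1 i.isLt.le)

/-- Conditional directed information `I(Xⁿ → Yⁿ | W) = ∑ᵢ I(Xⁱ; Yᵢ | Yⁱ⁻¹, W)`. -/
noncomputable def dirinfoCond (μ : Ω → ℝ) {α β γ : Type*} [Fintype α] [DecidableEq α]
    [Fintype β] [DecidableEq β] [Fintype γ] [DecidableEq γ]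
    {n : ℕ} (X : Ω → Fin n → α) (Y : Ω → Fin n → β) (W : Ω → γ) : ℝ :=
  ∑ i : Fin n, cmi μ (fun ω => pfx (X ω) (i.1 + 1) i.isLt)
    (fun ω => Y ω i) (fun ω => (pfx (Y ω) i.1 i.isLt.le, W ω))

/-- Causal conditional directed information
`I(Xⁿ → Yⁿ ‖ Zⁿ) = ∑ᵢ I(Xⁱ; Yᵢ | Yⁱ⁻¹, Zⁱ⁻¹)`. -/
noncomputable def dirinfoCausal (μ : Ω → ℝ) {α β γ : Type*} [Fintype α] [DecidableEq α]
    [Fintype β] [DecidableEq β] [Fintype γ] [DecidableEq γ]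
    {n : ℕ} (X : Ω → Fin n → α) (Y : Ω → Fin n → β) (Z : Ω → Fin n → γ) : ℝ :=
  ∑ i : Fin n, cmi μ (fun ω => pfx (X ω) (i.1 + 1) i.isLt)
    (fun ω => Y ω i) (fun ω => (pfx (Y ω) i.1 i.isLt.le, pfx (Z ω) i.1 i.isLt.le))

/-- Directed information from feedback to outputs
`I(Zⁿ⁻¹ → Yⁿ) = ∑ᵢ I(Zⁱ⁻¹; Yᵢ | Yⁱ⁻¹)`. -/
noncomputable def fbinfo (μ : Ω → ℝ) {ζ β : Type*} [Fintype ζ] [DecidableEq ζ]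
    [Fintype β] [DecidableEq β] {n : ℕ} (Z : Ω → Fin n → ζ) (Y : Ω → Fin n → β) : ℝ :=
  ∑ i : Fin n, cmi μ (fun ω => pfx (Z ω) i.1 i.isLt.le)
    (fun ω => Y ω i) (fun ω => pfx (Y ω) i.1 i.isLt.le)

section
set_option linter.unusedSectionVars false
variable {μ : Ω → ℝ}
variable {α β γ δ : Type*} [Fintype α] [DecidableEq α] [Fintype β] [DecidableEq β]
  [Fintype γ] [DecidableEq γ] [Fintype δ] [DecidableEq δ]

lemma pr_nonneg (hμ0 : ∀ ω, 0 ≤ μ ω) (X : Ω → α) (a : α) : 0 ≤ pr μ X a :=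
  Finset.sum_nonneg fun ω _ => hμ0 ω

lemma pr_sum (X : Ω → α) : ∑ a, pr μ X a = ∑ ω, μ ω :=
  Finset.sum_fiberwise _ _ _

lemma pr_comp (X : Ω → α) (f : α → β) (b : β) :
    pr μ (fun ω => f (X ω)) b = ∑ a ∈ univ.filter (fun a => f a = b), pr μ X a := by
  rw [pr, ← Finset.sum_fiberwise (univ.filter fun ω => f (X ω) = b) X μ,
    Finset.sum_filter]
  refine Finset.sum_congr rfl fun a _ => ?_
  rw [Finset.filter_filter]
  by_cases h : f a = b
  · simp only [h, if_true, pr]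
    congr 1
    ext ω
    simp only [mem_filter, mem_univ, true_and]
    constructor
    · rintro ⟨-, h2⟩; exact h2
    · intro h2; exact ⟨h2 ▸ h, h2⟩
  · simp only [h, if_false]
    refine Finset.sum_eq_zero fun ω hω => ?_
    simp only [mem_filter, mem_univ, true_and] at hω
    exact absurd (hω.2 ▸ hω.1) h

lemma pr_comp_inj (X : Ω → α) (f : α → β) (hf : Function.Injective f) (a : α) :
    pr μ (fun ω => f (X ω)) (f a) = pr μ X a := by
  unfold pr
  congr 1
  ext ω
  simp [hf.eq_iff]

lemma pr_comp_notin (X : Ω → α) (f : α → β) {b : β} (hb : ∀ a, f a ≠ b) :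
    pr μ (fun ω => f (X ω)) b = 0 := by
  unfold pr
  refine Finset.sum_eq_zero ?_
  intro ω hω
  simp only [mem_filter, mem_univ, true_and] at hω
  exact absurd hω (hb _)

lemma ent_comp (X : Ω → α) (f : α → β) (hf : Function.Injective f) :
    ent μ (fun ω => f (X ω)) = ent μ X := by
  unfold ent
  calc ∑ b : β, -(pr μ (fun ω => f (X ω)) b * Real.logb 2 (pr μ (fun ω => f (X ω)) b))
      = ∑ b ∈ univ.image f, -(pr μ (fun ω => f (X ω)) b * Real.logb 2 (pr μ (fun ω => f (X ω)) b)) := by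
        refine (Finset.sum_subset (Finset.subset_univ _) fun b _ hb => ?_).symm
        have : ∀ a, f a ≠ b := fun a ha => hb (Finset.mem_image.2 ⟨a, Finset.mem_univ a, ha⟩)
        rw [pr_comp_notin X f this]
        simp
    _ = ∑ a : α, -(pr μ (fun ω => f (X ω)) (f a) * Real.logb 2 (pr μ (fun ω => f (X ω)) (f a))) :=
        Finset.sum_image fun a _ a' _ h => hf h
    _ = ∑ a : α, -(pr μ X a * Real.logb 2 (pr μ X a)) := by
        refine Finset.sum_congr rfl fun a _ => ?_
        rw [pr_comp_inj X f hf]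

lemma ent_congr {X : Ω → α} {X' : Ω → β} (f : α → β) (hf : Function.Injective f)
    (h : ∀ ω, X' ω = f (X ω)) : ent μ X' = ent μ X := by
  have : X' = fun ω => f (X ω) := funext h
  rw [this, ent_comp X f hf]

end
section
set_option linter.unusedSectionVars false
open Finset
variable {Ω : Type*} [Fintype Ω] {μ : Ω → ℝ}
variable {α β γ δ : Type*} [Fintype α] [DecidableEq α] [Fintype β] [DecidableEq β]
  [Fintype γ] [DecidableEq γ] [Fintype δ] [DecidableEq δ]

lemma pr_fst (X : Ω → α) (Y : Ω → β) (a : α) :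
    pr μ X a = ∑ b, pr μ (fun ω => (X ω, Y ω)) (a, b) := by
  have h := pr_comp (μ := μ) (fun ω => (X ω, Y ω)) Prod.fst a
  have h2 : pr μ (fun ω => (X ω, Y ω).1) a = pr μ X a := rfl
  rw [h2] at h
  rw [h, Finset.sum_filter, Fintype.sum_prod_type]
  rw [Finset.sum_eq_single a (fun x _ hx => Finset.sum_eq_zero fun y _ => by simp [hx])
    (fun h => absurd (Finset.mem_univ a) h)]
  simp

lemma pr_snd (X : Ω → α) (Y : Ω → β) (b : β) :
    pr μ Y b = ∑ a, pr μ (fun ω => (X ω, Y ω)) (a, b) := by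
  have h := pr_comp (μ := μ) (fun ω => (X ω, Y ω)) Prod.snd b
  have h2 : pr μ (fun ω => (X ω, Y ω).2) b = pr μ Y b := rfl
  rw [h2] at h
  rw [h, Finset.sum_filter, Fintype.sum_prod_type]
  simp

lemma pr_pair_le_snd (hμ0 : ∀ ω, 0 ≤ μ ω) (X : Ω → α) (Y : Ω → β) (a : α) (b : β) :
    pr μ (fun ω => (X ω, Y ω)) (a, b) ≤ pr μ Y b := by
  refine Finset.sum_le_sum_of_subset_of_nonneg ?_ fun ω _ _ => hμ0 ω
  intro ω hω
  simp only [mem_filter, mem_univ, true_and, Prod.mk.injEq] at hω ⊢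
  exact hω.2

lemma pr_pair_eq (hμ0 : ∀ ω, 0 ≤ μ ω) (X : Ω → α) (Y : Ω → β) (a : α) (b : β) :
    pr μ (fun ω => (X ω, Y ω)) (a, b) = pr μ Y b * condpr μ X Y a b := by
  by_cases h : pr μ Y b = 0
  · have h0 : pr μ (fun ω => (X ω, Y ω)) (a, b) = 0 :=
      le_antisymm (h ▸ pr_pair_le_snd hμ0 X Y a b) (pr_nonneg hμ0 _ _)
    rw [h0, condpr, h0, h]
    simp
  · rw [condpr, mul_div_cancel₀ _ h]

lemma condpr_nonneg (hμ0 : ∀ ω, 0 ≤ μ ω) (X : Ω → α) (Y : Ω → β) (a : α) (b : β) :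
    0 ≤ condpr μ X Y a b :=
  div_nonneg (pr_nonneg hμ0 _ _) (pr_nonneg hμ0 _ _)

lemma condpr_sum (X : Ω → α) (Y : Ω → β) {b : β} (h : pr μ Y b ≠ 0) :
    ∑ a, condpr μ X Y a b = 1 := by
  unfold condpr
  rw [← Finset.sum_div, ← pr_snd X Y b, div_self h]

end

section
set_option linter.unusedSectionVars false
open Finset

variable {γ δ : Type*} [Fintype γ] [DecidableEq γ] [Fintype δ] [DecidableEq δ]

lemma gibbs (w t : γ → ℝ) (hw : ∀ c, 0 ≤ w c) (hw1 : ∑ c, w c = 1)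
    (ht : ∀ c, 0 < w c → 0 < t c) :
    ∑ c, w c * Real.logb 2 (t c) ≤ Real.logb 2 (∑ c, w c * t c) := by
  classical
  set s := univ.filter (fun c => 0 < w c) with hs
  have hzero : ∀ c, c ∉ s → w c = 0 := by
    intro c hc
    simp only [hs, mem_filter, mem_univ, true_and, not_lt] at hc
    exact le_antisymm hc (hw c)
  have hres : ∀ f : γ → ℝ, ∑ c ∈ s, w c * f c = ∑ c, w c * f c := by
    intro f
    refine Finset.sum_subset (Finset.subset_univ s) fun c _ hc => ?_
    rw [hzero c hc, zero_mul]
  have hw1s : ∑ c ∈ s, w c = 1 := by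
    rw [← hw1]
    refine Finset.sum_subset (Finset.subset_univ s) fun c _ hc => hzero c hc
  have hj := strictConcaveOn_log_Ioi.concaveOn.le_map_sum
    (t := s) (w := w) (p := t) (fun c hc => hw c) hw1s
    (fun c hc => ht c (by simpa [hs] using hc))
  simp only [smul_eq_mul] at hj
  have hlog2 : (0:ℝ) < Real.log 2 := Real.log_pos one_lt_two
  have key : ∑ c, w c * Real.logb 2 (t c) ≤ Real.logb 2 (∑ c ∈ s, w c * t c) := by
    rw [Real.logb, ← hres (fun c => Real.logb 2 (t c))]
    have : ∑ c ∈ s, w c * Real.logb 2 (t c) = (∑ c ∈ s, w c * Real.log (t c)) / Real.log 2 := by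
      rw [Finset.sum_div]
      refine Finset.sum_congr rfl fun c _ => ?_
      rw [Real.logb, mul_div_assoc]
    rw [this]
    exact div_le_div_of_nonneg_right hj hlog2.le
  rw [hres] at key
  exact key

lemma entD_le_logb_card (p : γ → ℝ) (h0 : ∀ c, 0 ≤ p c) (h1 : ∑ c, p c = 1) :
    entD p ≤ Real.logb 2 (Fintype.card γ) := by
  have hstep : entD p = ∑ c, p c * Real.logb 2 (p c)⁻¹ := by
    unfold entD
    refine Finset.sum_congr rfl fun c _ => ?_
    rw [Real.logb_inv]
    ring
  rw [hstep]
  have hg := gibbs p (fun c => (p c)⁻¹) h0 h1 (fun c hc => inv_pos.2 hc)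
  refine hg.trans ?_
  have hsum : ∑ c, p c * (p c)⁻¹ ≤ (Fintype.card γ : ℝ) := by
    calc ∑ c, p c * (p c)⁻¹ ≤ ∑ _c : γ, (1:ℝ) := by
          refine Finset.sum_le_sum fun c _ => ?_
          by_cases h : p c = 0
          · simp [h]
          · rw [mul_inv_cancel₀ h]
      _ = (Fintype.card γ : ℝ) := by simp
  have hpos : (0:ℝ) < ∑ c, p c * (p c)⁻¹ := by
    have hex : ∃ c, p c ≠ 0 := by
      by_contra h
      push_neg at h
      rw [Finset.sum_eq_zero (fun c _ => h c)] at h1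
      norm_num at h1
    obtain ⟨c, hc⟩ := hex
    refine Finset.sum_pos' (fun d _ => ?_) ⟨c, Finset.mem_univ c, ?_⟩
    · by_cases h : p d = 0
      · simp [h]
      · rw [mul_inv_cancel₀ h]; norm_num
    · rw [mul_inv_cancel₀ hc]; norm_num
  exact Real.logb_le_logb_of_le one_lt_two hpos hsum

lemma klb (p q : γ → ℝ) (hp0 : ∀ c, 0 ≤ p c) (hp1 : ∑ c, p c = 1)
    (hq0 : ∀ c, 0 ≤ q c) (hq1 : ∑ c, q c ≤ 1) (hpq : ∀ c, 0 < p c → 0 < q c) :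
    ∑ c, p c * Real.logb 2 (q c / p c) ≤ 0 := by
  have hg := gibbs p (fun c => q c / p c) hp0 hp1 (fun c hc => div_pos (hpq c hc) hc)
  refine hg.trans ?_
  have hle : ∑ c, p c * (q c / p c) ≤ 1 := by
    refine (Finset.sum_le_sum (fun c _ => ?_)).trans hq1
    by_cases h : p c = 0
    · simp [h]; exact hq0 c
    · rw [mul_div_cancel₀ _ h]
  have hnn : 0 ≤ ∑ c, p c * (q c / p c) :=
    Finset.sum_nonneg fun c _ => mul_nonneg (hp0 c) (div_nonneg (hq0 c) (hp0 c))
  exact Real.logb_nonpos one_lt_two hnn hle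

end
section
set_option linter.unusedSectionVars false
open Finset
variable {Ω : Type*} [Fintype Ω] {μ : Ω → ℝ}
variable {α β γ δ : Type*} [Fintype α] [DecidableEq α] [Fintype β] [DecidableEq β]
  [Fintype γ] [DecidableEq γ] [Fintype δ] [DecidableEq δ]

lemma subaddD (p : α × β → ℝ) (h0 : ∀ c, 0 ≤ p c) (h1 : ∑ c, p c = 1) :
    entD p ≤ entD (fun a => ∑ b, p (a, b)) + entD (fun b => ∑ a, p (a, b)) := by
  set pA : α → ℝ := fun a => ∑ b, p (a, b) with hpA
  set pB : β → ℝ := fun b => ∑ a, p (a, b) with hpB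
  have hA0 : ∀ a, 0 ≤ pA a := fun a => Finset.sum_nonneg fun b _ => h0 _
  have hB0 : ∀ b, 0 ≤ pB b := fun b => Finset.sum_nonneg fun a _ => h0 _
  have hA1 : ∑ a, pA a = 1 := by rw [hpA, ← h1, Fintype.sum_prod_type]
  have hB1 : ∑ b, pB b = 1 := by
    rw [hpB, ← h1, Fintype.sum_prod_type, Finset.sum_comm]
  have hApos : ∀ a b, 0 < p (a, b) → 0 < pA a := by
    intro a b h
    exact lt_of_lt_of_le h (Finset.single_le_sum (fun b' _ => h0 (a, b')) (Finset.mem_univ b))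
  have hBpos : ∀ a b, 0 < p (a, b) → 0 < pB b := by
    intro a b h
    exact lt_of_lt_of_le h (Finset.single_le_sum (fun a' _ => h0 (a', b)) (Finset.mem_univ a))
  have key : entD pA + entD pB - entD p
      = -∑ c : α × β, p c * Real.logb 2 ((pA c.1 * pB c.2) / p c) := by
    have eA : entD pA = ∑ c : α × β, -(p c * Real.logb 2 (pA c.1)) := by
      unfold entD
      rw [Fintype.sum_prod_type]
      refine Finset.sum_congr rfl fun a _ => ?_
      refine Eq.symm ?_
      calc ∑ y : β, -(p (a, y) * Real.logb 2 (pA (a, y).1))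
          = -((∑ y : β, p (a, y)) * Real.logb 2 (pA a)) := by
            rw [Finset.sum_neg_distrib, Finset.sum_mul]
        _ = -(pA a * Real.logb 2 (pA a)) := rfl
    have eB : entD pB = ∑ c : α × β, -(p c * Real.logb 2 (pB c.2)) := by
      unfold entD
      rw [Fintype.sum_prod_type, Finset.sum_comm]
      refine Finset.sum_congr rfl fun b _ => ?_
      refine Eq.symm ?_
      calc ∑ x : α, -(p (x, b) * Real.logb 2 (pB (x, b).2))
          = -((∑ x : α, p (x, b)) * Real.logb 2 (pB b)) := by
            rw [Finset.sum_neg_distrib, Finset.sum_mul]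
        _ = -(pB b * Real.logb 2 (pB b)) := rfl
    rw [eA, eB, entD, ← Finset.sum_add_distrib, ← Finset.sum_sub_distrib,
      ← Finset.sum_neg_distrib]
    refine Finset.sum_congr rfl fun c _ => ?_
    rcases eq_or_lt_of_le (h0 c) with h | h
    · simp [← h]
    · have h1' : p c ≠ 0 := ne_of_gt h
      have hA' : pA c.1 ≠ 0 := ne_of_gt (hApos c.1 c.2 (by rwa [Prod.mk.eta]))
      have hB' : pB c.2 ≠ 0 := ne_of_gt (hBpos c.1 c.2 (by rwa [Prod.mk.eta]))
      rw [Real.logb_div (mul_ne_zero hA' hB') h1', Real.logb_mul hA' hB']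
      ring
  have hkl : ∑ c : α × β, p c * Real.logb 2 ((pA c.1 * pB c.2) / p c) ≤ 0 := by
    refine klb p (fun c => pA c.1 * pB c.2) h0 h1
      (fun c => mul_nonneg (hA0 _) (hB0 _)) ?_
      (fun c hc => mul_pos (hApos c.1 c.2 (by rwa [Prod.mk.eta])) (hBpos c.1 c.2 (by rwa [Prod.mk.eta])))
    refine le_of_eq ?_
    rw [Fintype.sum_prod_type]
    calc ∑ a, ∑ b, pA a * pB b = ∑ a, pA a * ∑ b, pB b := by
          refine Finset.sum_congr rfl fun a _ => ?_
          rw [Finset.mul_sum]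
      _ = 1 := by rw [hB1]; simp [hA1]
  have := key ▸ (neg_nonneg.2 hkl)
  linarith

lemma ent_pair_le (hμ0 : ∀ ω, 0 ≤ μ ω) (hμ1 : ∑ ω, μ ω = 1) (X : Ω → α) (Y : Ω → β) :
    ent μ (fun ω => (X ω, Y ω)) ≤ ent μ X + ent μ Y := by
  have h := subaddD (fun c => pr μ (fun ω => (X ω, Y ω)) c)
    (fun c => pr_nonneg hμ0 _ _) (by rw [pr_sum]; exact hμ1)
  have hA : (fun a => ∑ b, pr μ (fun ω => (X ω, Y ω)) (a, b)) = pr μ X :=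
    funext fun a => (pr_fst X Y a).symm
  have hB : (fun b => ∑ a, pr μ (fun ω => (X ω, Y ω)) (a, b)) = pr μ Y :=
    funext fun b => (pr_snd X Y b).symm
  rw [hA, hB] at h
  exact h

end
section
set_option linter.unusedSectionVars false
open Finset
variable {Ω : Type*} [Fintype Ω] {μ : Ω → ℝ}
variable {α β γ δ : Type*} [Fintype α] [DecidableEq α] [Fintype β] [DecidableEq β]
  [Fintype γ] [DecidableEq γ] [Fintype δ] [DecidableEq δ]

lemma condent_eq_sum (hμ0 : ∀ ω, 0 ≤ μ ω) (X : Ω → α) (Y : Ω → β) :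
    condent μ X Y = ∑ b, pr μ Y b * entD (fun a => condpr μ X Y a b) := by
  unfold condent ent
  rw [Fintype.sum_prod_type, Finset.sum_comm, ← Finset.sum_sub_distrib]
  refine Finset.sum_congr rfl fun b _ => ?_
  by_cases hb : pr μ Y b = 0
  · have hz : ∀ a, pr μ (fun ω => (X ω, Y ω)) (a, b) = 0 := fun a =>
      le_antisymm (hb ▸ pr_pair_le_snd hμ0 X Y a b) (pr_nonneg hμ0 _ _)
    rw [hb]
    simp [hz]
  · have hq : ∀ a, pr μ Y b * condpr μ X Y a b = pr μ (fun ω => (X ω, Y ω)) (a, b) :=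
      fun a => (pr_pair_eq hμ0 X Y a b).symm
    have expand : pr μ Y b * entD (fun a => condpr μ X Y a b)
        = ∑ a, -(pr μ (fun ω => (X ω, Y ω)) (a, b) * Real.logb 2 (condpr μ X Y a b)) := by
      unfold entD
      rw [Finset.mul_sum]
      refine Finset.sum_congr rfl fun a _ => ?_
      rw [← hq a]
      ring
    rw [expand]
    have hmarg : pr μ Y b = ∑ a, pr μ (fun ω => (X ω, Y ω)) (a, b) := pr_snd X Y b
    calc ∑ a, -(pr μ (fun ω => (X ω, Y ω)) (a, b) * Real.logb 2 (pr μ (fun ω => (X ω, Y ω)) (a, b)))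
          - -(pr μ Y b * Real.logb 2 (pr μ Y b))
        = ∑ a, (-(pr μ (fun ω => (X ω, Y ω)) (a, b) * Real.logb 2 (pr μ (fun ω => (X ω, Y ω)) (a, b)))
            + pr μ (fun ω => (X ω, Y ω)) (a, b) * Real.logb 2 (pr μ Y b)) := by
          rw [Finset.sum_add_distrib, ← Finset.sum_mul, ← hmarg]
          ring
      _ = ∑ a, -(pr μ (fun ω => (X ω, Y ω)) (a, b) * Real.logb 2 (condpr μ X Y a b)) := by
          refine Finset.sum_congr rfl fun a _ => ?_
          rcases eq_or_lt_of_le (pr_nonneg hμ0 (fun ω => (X ω, Y ω)) (a, b)) with h | h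
          · rw [← h]; ring
          · rw [condpr, Real.logb_div (ne_of_gt h) hb]
            ring

lemma pr_perm {σ τ : Type*} [Fintype σ] [DecidableEq σ] [Fintype τ] [DecidableEq τ]
    {S : Ω → σ} {T : Ω → τ} (f : σ → τ) (hf : Function.Injective f)
    (hp : ∀ ω, T ω = f (S ω)) (s : σ) : pr μ T (f s) = pr μ S s := by
  have : T = fun ω => f (S ω) := funext hp
  rw [this, pr_comp_inj S f hf]

lemma cmi_nonneg (hμ0 : ∀ ω, 0 ≤ μ ω) (X : Ω → α) (Y : Ω → β) (Z : Ω → γ) :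
    0 ≤ cmi μ X Y Z := by
  unfold cmi
  rw [condent_eq_sum hμ0 X Z, condent_eq_sum hμ0 Y Z,
    condent_eq_sum hμ0 (fun ω => (X ω, Y ω)) Z, ← Finset.sum_add_distrib,
    ← Finset.sum_sub_distrib]
  refine Finset.sum_nonneg fun z _ => ?_
  rcases eq_or_lt_of_le (pr_nonneg hμ0 Z z) with hz | hz
  · rw [← hz]; simp
  · rw [← mul_add, ← mul_sub]
    refine mul_nonneg hz.le ?_
    rw [sub_nonneg]
    have hmargA : ∀ a, ∑ b, condpr μ (fun ω => (X ω, Y ω)) Z (a, b) z = condpr μ X Z a z := by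
      intro a
      unfold condpr
      rw [← Finset.sum_div]
      congr 1
      have hperm : ∀ b, pr μ (fun ω => ((X ω, Y ω), Z ω)) ((a, b), z)
          = pr μ (fun ω => ((X ω, Z ω), Y ω)) ((a, z), b) := by
        intro b
        exact pr_perm (S := fun ω => ((X ω, Z ω), Y ω)) (T := fun ω => ((X ω, Y ω), Z ω))
          (fun p : (α × γ) × β => ((p.1.1, p.2), p.1.2))
          (fun p q h => by
            simp only [Prod.mk.injEq] at h
            exact Prod.ext (Prod.ext h.1.1 h.2) h.1.2)
          (fun ω => rfl) ((a, z), b)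
      calc ∑ b, pr μ (fun ω => ((X ω, Y ω), Z ω)) ((a, b), z)
          = ∑ b, pr μ (fun ω => ((X ω, Z ω), Y ω)) ((a, z), b) := by
            exact Finset.sum_congr rfl fun b _ => hperm b
        _ = pr μ (fun ω => (X ω, Z ω)) (a, z) := (pr_fst (fun ω => (X ω, Z ω)) Y (a, z)).symm
    have hmargB : ∀ b, ∑ a, condpr μ (fun ω => (X ω, Y ω)) Z (a, b) z = condpr μ Y Z b z := by
      intro b
      unfold condpr
      rw [← Finset.sum_div]
      congr 1
      have hperm : ∀ a, pr μ (fun ω => ((X ω, Y ω), Z ω)) ((a, b), z)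
          = pr μ (fun ω => ((Y ω, Z ω), X ω)) ((b, z), a) := by
        intro a
        exact pr_perm (S := fun ω => ((Y ω, Z ω), X ω)) (T := fun ω => ((X ω, Y ω), Z ω))
          (fun p : (β × γ) × α => ((p.2, p.1.1), p.1.2))
          (fun p q h => by
            simp only [Prod.mk.injEq] at h
            exact Prod.ext (Prod.ext h.1.2 h.2) h.1.1)
          (fun ω => rfl) ((b, z), a)
      calc ∑ a, pr μ (fun ω => ((X ω, Y ω), Z ω)) ((a, b), z)
          = ∑ a, pr μ (fun ω => ((Y ω, Z ω), X ω)) ((b, z), a) := by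
            exact Finset.sum_congr rfl fun a _ => hperm a
        _ = pr μ (fun ω => (Y ω, Z ω)) (b, z) := (pr_fst (fun ω => (Y ω, Z ω)) X (b, z)).symm
    have hsub := subaddD (fun c : α × β => condpr μ (fun ω => (X ω, Y ω)) Z c z)
      (fun c => condpr_nonneg hμ0 _ _ _ _)
      (condpr_sum (fun ω => (X ω, Y ω)) Z (ne_of_gt hz))
    calc entD (fun c : α × β => condpr μ (fun ω => (X ω, Y ω)) Z c z)
        ≤ entD (fun a => ∑ b, condpr μ (fun ω => (X ω, Y ω)) Z (a, b) z)
          + entD (fun b => ∑ a, condpr μ (fun ω => (X ω, Y ω)) Z (a, b) z) := hsub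
      _ = entD (fun a => condpr μ X Z a z) + entD (fun b => condpr μ Y Z b z) := by
          rw [funext hmargA, funext hmargB]

lemma condent_le_ent (hμ0 : ∀ ω, 0 ≤ μ ω) (hμ1 : ∑ ω, μ ω = 1) (X : Ω → α) (Y : Ω → β) :
    condent μ X Y ≤ ent μ X := by
  have h := ent_pair_le hμ0 hμ1 X Y
  unfold condent
  linarith

lemma condent_drop (hμ0 : ∀ ω, 0 ≤ μ ω) (X : Ω → α) (Z : Ω → γ) (U : Ω → δ) :
    condent μ X (fun ω => (Z ω, U ω)) ≤ condent μ X Z := by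
  have h := cmi_nonneg hμ0 X U Z
  unfold cmi condent at h
  unfold condent
  have e1 : ent μ (fun ω => ((X ω, U ω), Z ω)) = ent μ (fun ω => (X ω, (Z ω, U ω))) :=
    ent_congr (fun p : α × (γ × δ) => ((p.1, p.2.2), p.2.1))
      (fun p q h => by
        simp only [Prod.mk.injEq] at h
        exact Prod.ext h.1.1 (Prod.ext h.2 h.1.2))
      (fun ω => rfl)
  have e2 : ent μ (fun ω => (U ω, Z ω)) = ent μ (fun ω => (Z ω, U ω)) :=
    ent_congr (fun p : γ × δ => (p.2, p.1))
      (fun p q h => by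
        simp only [Prod.mk.injEq] at h
        exact Prod.ext h.2 h.1)
      (fun ω => rfl)
  linarith

end
section
set_option linter.unusedSectionVars false
open Finset
variable {Ω : Type*} [Fintype Ω] {μ : Ω → ℝ}
variable {α β γ δ : Type*} [Fintype α] [DecidableEq α] [Fintype β] [DecidableEq β]
  [Fintype γ] [DecidableEq γ] [Fintype δ] [DecidableEq δ]

lemma condent_congr_right {X : Ω → α} {Z : Ω → γ} {Z' : Ω → δ} (f : γ → δ)
    (hf : Function.Injective f) (h : ∀ ω, Z' ω = f (Z ω)) :
    condent μ X Z' = condent μ X Z := by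
  unfold condent
  have e2 : ent μ (fun ω => (X ω, Z' ω)) = ent μ (fun ω => (X ω, Z ω)) :=
    ent_congr (X := fun ω => (X ω, Z ω)) (fun p : α × γ => (p.1, f p.2))
      (fun p q hpq => by
        simp only [Prod.mk.injEq] at hpq
        exact Prod.ext hpq.1 (hf hpq.2))
      (fun ω => by rw [h ω])
  rw [ent_congr f hf h, e2]

lemma cmi_comm (X : Ω → α) (Y : Ω → β) (Z : Ω → γ) :
    cmi μ X Y Z = cmi μ Y X Z := by
  unfold cmi condent
  have e : ent μ (fun ω => ((X ω, Y ω), Z ω)) = ent μ (fun ω => ((Y ω, X ω), Z ω)) :=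
    ent_congr (fun p : (β × α) × γ => ((p.1.2, p.1.1), p.2))
      (fun p q h => by
        simp only [Prod.mk.injEq] at h
        exact Prod.ext (Prod.ext h.1.2 h.1.1) h.2)
      (fun ω => rfl)
  rw [e]
  ring

lemma cmi_eq (X : Ω → α) (Y : Ω → β) (Z : Ω → γ) :
    cmi μ X Y Z = condent μ X Z - condent μ X (fun ω => (Y ω, Z ω)) := by
  unfold cmi condent
  have e1 : ent μ (fun ω => ((X ω, Y ω), Z ω)) = ent μ (fun ω => (X ω, (Y ω, Z ω))) :=
    ent_congr (fun p : α × (β × γ) => ((p.1, p.2.1), p.2.2))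
      (fun p q h => by
        simp only [Prod.mk.injEq] at h
        exact Prod.ext h.1.1 (Prod.ext h.1.2 h.2))
      (fun ω => rfl)
  rw [e1]
  ring

lemma ent_subsingleton [Subsingleton α] (hμ1 : ∑ ω, μ ω = 1) (X : Ω → α) :
    ent μ X = 0 := by
  unfold ent
  refine Finset.sum_eq_zero fun a _ => ?_
  have : pr μ X a = 1 := by
    unfold pr
    rw [Finset.filter_true_of_mem (fun ω _ => Subsingleton.elim _ _)]
    exact hμ1
  rw [this]
  simp

lemma entD_onehot (p : α → ℝ) (c₀ : α) (h1 : p c₀ = 1) (h : ∀ c, c ≠ c₀ → p c = 0) :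
    entD p = 0 := by
  unfold entD
  refine Finset.sum_eq_zero fun c _ => ?_
  by_cases hc : c = c₀
  · rw [hc, h1]; simp
  · rw [h c hc]; simp

lemma entD_prod_kernel (q : α → ℝ) (K : α → β → ℝ) (hK1 : ∀ a, ∑ b, K a b = 1) :
    entD (fun p : α × β => q p.1 * K p.1 p.2) = entD q + ∑ a, q a * entD (K a) := by
  unfold entD
  rw [Fintype.sum_prod_type, ← Finset.sum_add_distrib]
  refine Finset.sum_congr rfl fun a _ => ?_
  have step : ∀ b, -(q a * K a b * Real.logb 2 (q a * K a b))
      = -(q a * K a b * Real.logb 2 (q a)) + q a * -(K a b * Real.logb 2 (K a b)) := by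
    intro b
    by_cases hq : q a = 0
    · simp [hq]
    · by_cases hK : K a b = 0
      · simp [hK]
      · rw [Real.logb_mul hq hK]; ring
  calc ∑ b, -(q a * K a b * Real.logb 2 (q a * K a b))
      = ∑ b, (-(q a * K a b * Real.logb 2 (q a)) + q a * -(K a b * Real.logb 2 (K a b))) :=
        Finset.sum_congr rfl fun b _ => step b
    _ = -(q a * Real.logb 2 (q a)) + q a * ∑ b, -(K a b * Real.logb 2 (K a b)) := by
        rw [Finset.sum_add_distrib, ← Finset.mul_sum]
        congr 1
        have : ∑ b, -(q a * K a b * Real.logb 2 (q a))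
            = -((∑ b, K a b) * (q a * Real.logb 2 (q a))) := by
          rw [Finset.sum_neg_distrib]
          congr 1
          rw [← Finset.sum_mul, ← Finset.mul_sum]
          ring
        rw [this, hK1 a]
        ring

lemma pr_achieved (hμ0 : ∀ ω, 0 ≤ μ ω) {X : Ω → α} {a : α} (h : pr μ X a ≠ 0) :
    ∃ ω, 0 < μ ω ∧ X ω = a := by
  by_contra hc
  push_neg at hc
  refine h (Finset.sum_eq_zero fun ω hω => ?_)
  simp only [mem_filter, mem_univ, true_and] at hω
  rcases eq_or_lt_of_le (hμ0 ω) with h' | h'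
  · exact h'.symm
  · exact absurd hω (hc ω h')

end
section
set_option linter.unusedSectionVars false
open Finset
variable {Ω : Type*} [Fintype Ω] {μ : Ω → ℝ}
variable {τ : Type*} [Fintype τ] [DecidableEq τ]

lemma ent_unif {M : ℕ} (hM : 0 < M) (W : Ω → Fin M) (hunif : ∀ w, pr μ W w = 1 / M) :
    ent μ W = Real.logb 2 M := by
  unfold ent
  have h : ∀ w : Fin M, -(pr μ W w * Real.logb 2 (pr μ W w))
      = (1 / M) * Real.logb 2 M := by
    intro w
    rw [hunif w, one_div, Real.logb_inv]
    ring
  rw [Finset.sum_congr rfl fun w _ => h w, Finset.sum_const, Finset.card_univ,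
    Fintype.card_fin, nsmul_eq_mul]
  have hM' : (M : ℝ) ≠ 0 := Nat.cast_ne_zero.2 hM.ne'
  field_simp

lemma fano (hμ0 : ∀ ω, 0 ≤ μ ω) (hμ1 : ∑ ω, μ ω = 1) {M : ℕ} (hM : 0 < M)
    (W : Ω → Fin M) (T : Ω → τ) (g : τ → Fin M) :
    condent μ W T
      ≤ 1 + (∑ ω ∈ Finset.univ.filter (fun ω => g (T ω) ≠ W ω), μ ω) * Real.logb 2 M := by
  classical
  set Wh : Ω → Fin M := fun ω => g (T ω) with hWh
  set E : Ω → Bool := fun ω => decide (g (T ω) ≠ W ω) with hE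
  set V : Ω → Bool × Fin M := fun ω => (E ω, Wh ω) with hV
  set Pe : ℝ := ∑ ω ∈ Finset.univ.filter (fun ω => g (T ω) ≠ W ω), μ ω with hPe
  -- step 1: H(W|T) = H(W | (Wh, T))
  have s1 : condent μ W T = condent μ W (fun ω => (Wh ω, T ω)) :=
    (condent_congr_right (Z := T) (fun y : τ => (g y, y))
      (fun y1 y2 h => congrArg Prod.snd h) (fun ω => rfl)).symm
  -- step 2
  have s2 : condent μ W (fun ω => (Wh ω, T ω)) ≤ condent μ W Wh :=
    condent_drop hμ0 W Wh T
  -- step 3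
  have s3 : condent μ W Wh = condent μ (fun ω => (W ω, E ω)) Wh := by
    unfold condent
    have e : ent μ (fun ω => ((W ω, E ω), Wh ω)) = ent μ (fun ω => (W ω, Wh ω)) :=
      ent_congr (X := fun ω => (W ω, Wh ω))
        (fun p : Fin M × Fin M => ((p.1, decide (p.2 ≠ p.1)), p.2))
        (fun p q h => by
          simp only [Prod.mk.injEq] at h
          exact Prod.ext h.1.1 h.2)
        (fun ω => rfl)
    rw [e]
  -- step 4: chain rule
  have s4 : condent μ (fun ω => (W ω, E ω)) Wh = condent μ W V + condent μ E Wh := by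
    unfold condent
    have e : ent μ (fun ω => ((W ω, E ω), Wh ω))
        = ent μ (fun ω => (W ω, (E ω, Wh ω))) :=
      ent_congr (X := fun ω => (W ω, (E ω, Wh ω)))
        (fun p : Fin M × (Bool × Fin M) => ((p.1, p.2.1), p.2.2))
        (fun p q h => by
          simp only [Prod.mk.injEq] at h
          exact Prod.ext h.1.1 (Prod.ext h.1.2 h.2))
        (fun ω => rfl)
    rw [e]
    ring
  -- step 5: H(E|Wh) ≤ 1
  have s5 : condent μ E Wh ≤ 1 := by
    refine (condent_le_ent hμ0 hμ1 E Wh).trans ?_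
    have h := entD_le_logb_card (fun e => pr μ E e) (fun e => pr_nonneg hμ0 E e)
      (by rw [pr_sum]; exact hμ1)
    have hent : ent μ E = entD (fun e => pr μ E e) := rfl
    rw [hent]
    refine h.trans ?_
    rw [Fintype.card_bool]
    norm_num [Real.logb_self_eq_one]
  -- step 6: H(W|V) ≤ Pe log M
  have s6 : condent μ W V ≤ Pe * Real.logb 2 M := by
    rw [condent_eq_sum hμ0 W V]
    have bound : ∀ v : Bool × Fin M,
        pr μ V v * entD (fun a => condpr μ W V a v)
          ≤ pr μ V v * (if v.1 = true then Real.logb 2 M else 0) := by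
      intro v
      rcases eq_or_ne (pr μ V v) 0 with h0 | h0
      · rw [h0, zero_mul, zero_mul]
      · rcases Bool.eq_false_or_eq_true v.1 with hb | hb
        · -- error case
          rw [hb, if_pos rfl]
          refine mul_le_mul_of_nonneg_left ?_ (pr_nonneg hμ0 V v)
          have h := entD_le_logb_card (fun a => condpr μ W V a v)
            (fun a => condpr_nonneg hμ0 W V a v) (condpr_sum W V h0)
          rwa [Fintype.card_fin] at h
        · -- no error: conditional is one-hot at v.2
          have hzero : ∀ a, a ≠ v.2 → condpr μ W V a v = 0 := by
            intro a ha
            unfold condpr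
            have : pr μ (fun ω => (W ω, V ω)) (a, v) = 0 := by
              refine Finset.sum_eq_zero fun ω hω => ?_
              simp only [mem_filter, mem_univ, true_and, Prod.mk.injEq] at hω
              exfalso
              obtain ⟨hWa, hVv⟩ := hω
              have hEv : E ω = v.1 := by rw [← hVv]
              have hWhv : Wh ω = v.2 := by rw [← hVv]
              rw [hb] at hEv
              have hne : ¬ (g (T ω) ≠ W ω) := by simpa [hE] using hEv
              push_neg at hne
              exact ha (by rw [← hWa, ← hWhv, hWh]; exact hne.symm)
            rw [this, zero_div]
          have hone : condpr μ W V v.2 v = 1 := by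
            have hsum := condpr_sum W V h0
            rwa [Finset.sum_eq_single v.2 (fun a _ ha => hzero a ha)
              (fun h => absurd (Finset.mem_univ v.2) h)] at hsum
          rw [entD_onehot _ v.2 hone hzero, hb, if_neg (by simp)]
    refine (Finset.sum_le_sum fun v _ => bound v).trans ?_
    have htot : ∑ v : Bool × Fin M, pr μ V v * (if v.1 = true then Real.logb 2 M else 0)
        = (∑ w : Fin M, pr μ V (true, w)) * Real.logb 2 M := by
      rw [Fintype.sum_prod_type, Fintype.sum_bool]
      simp [Finset.sum_mul]
    rw [htot]
    have hmarg : ∑ w : Fin M, pr μ V (true, w) = pr μ E true := (pr_fst E Wh true).symm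
    rw [hmarg]
    have hEP : pr μ E true = Pe := by
      unfold pr
      rw [hPe]
      congr 1
      ext ω
      simp [hE]
    rw [hEP]
  calc condent μ W T = condent μ W (fun ω => (Wh ω, T ω)) := s1
    _ ≤ condent μ W Wh := s2
    _ = condent μ W V + condent μ E Wh := by rw [s3, s4]
    _ ≤ Pe * Real.logb 2 M + 1 := add_le_add s6 s5
    _ = 1 + Pe * Real.logb 2 M := by ring

end
section
set_option linter.unusedSectionVars false
open Finset
variable {Ω : Type*} [Fintype Ω] {μ : Ω → ℝ}
variable {α β : Type*} [Fintype α] [DecidableEq α] [Fintype β] [DecidableEq β]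

lemma perstep (hμ0 : ∀ ω, 0 ≤ μ ω) (hμ1 : ∑ ω, μ ω = 1)
    {A B W' Z' : Type*} [Fintype A] [DecidableEq A] [Fintype B] [DecidableEq B]
    [Fintype W'] [DecidableEq W'] [Fintype Z'] [DecidableEq Z']
    (K : α → β → ℝ) (hK1 : ∀ a, ∑ b, K a b = 1) (C : ℝ)
    (hC : ∀ q : α → ℝ, (∀ a, 0 ≤ q a) → (∑ a, q a = 1) →
      entD q + entD (fun b => ∑ a, q a * K a b)
        - entD (fun p : α × β => q p.1 * K p.1 p.2) ≤ C)
    (Yi : Ω → β) (Xle : Ω → A) (Ylt : Ω → B) (Wv : Ω → W') (Zlt : Ω → Z')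
    (xl : A → α)
    (hmem' : ∀ ω, 0 < μ ω → ∀ b,
      condpr μ Yi (fun ω' => (Xle ω', (Ylt ω', (Wv ω', Zlt ω')))) b
        (Xle ω, (Ylt ω, (Wv ω, Zlt ω))) = K (xl (Xle ω)) b) :
    cmi μ Wv Yi Ylt + cmi μ Xle Yi (fun ω => (Ylt ω, Wv ω)) ≤ C := by
  classical
  set V : Ω → A × (B × (W' × Z')) := fun ω => (Xle ω, (Ylt ω, (Wv ω, Zlt ω))) with hVdef
  set q : α → ℝ := pr μ (fun ω => xl (Xle ω)) with hqdef
  have e1 : cmi μ Wv Yi Ylt = condent μ Yi Ylt - condent μ Yi (fun ω => (Ylt ω, Wv ω)) := by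
    rw [cmi_comm, cmi_eq]
    have hc : condent μ Yi (fun ω => (Wv ω, Ylt ω))
        = condent μ Yi (fun ω => (Ylt ω, Wv ω)) :=
      condent_congr_right (Z := fun ω => (Ylt ω, Wv ω)) (fun p : B × W' => (p.2, p.1))
        (fun p1 p2 h => by
          simp only [Prod.mk.injEq] at h
          exact Prod.ext h.2 h.1)
        (fun ω => rfl)
    rw [hc]
  have e2 : cmi μ Xle Yi (fun ω => (Ylt ω, Wv ω))
      = condent μ Yi (fun ω => (Ylt ω, Wv ω))
        - condent μ Yi (fun ω => (Xle ω, (Ylt ω, Wv ω))) := by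
    rw [cmi_comm, cmi_eq]
  have e3 : condent μ Yi V ≤ condent μ Yi (fun ω => (Xle ω, (Ylt ω, Wv ω))) := by
    have heq : condent μ Yi V
        = condent μ Yi (fun ω => ((Xle ω, (Ylt ω, Wv ω)), Zlt ω)) :=
      condent_congr_right (Z := fun ω => ((Xle ω, (Ylt ω, Wv ω)), Zlt ω))
        (fun p : (A × (B × W')) × Z' => (p.1.1, (p.1.2.1, (p.1.2.2, p.2))))
        (fun p1 p2 h => by
          simp only [Prod.mk.injEq] at h
          exact Prod.ext (Prod.ext h.1 (Prod.ext h.2.1 h.2.2.1)) h.2.2.2)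
        (fun ω => rfl)
    rw [heq]
    exact condent_drop hμ0 Yi (fun ω => (Xle ω, (Ylt ω, Wv ω))) Zlt
  have hach : ∀ v, pr μ V v ≠ 0 → ∀ b, condpr μ Yi V b v = K (xl v.1) b := by
    intro v hv b
    obtain ⟨ω, hω, hVω⟩ := pr_achieved hμ0 hv
    rw [← hVω]
    exact hmem' ω hω b
  have hq : ∀ a, q a = ∑ v ∈ univ.filter (fun v => xl v.1 = a), pr μ V v := by
    intro a
    exact pr_comp V (fun v => xl v.1) a
  have e4 : condent μ Yi V = ∑ a, q a * entD (K a) := by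
    rw [condent_eq_sum hμ0 Yi V]
    calc ∑ v, pr μ V v * entD (fun b => condpr μ Yi V b v)
        = ∑ v, pr μ V v * entD (K (xl v.1)) := by
          refine Finset.sum_congr rfl fun v _ => ?_
          rcases eq_or_ne (pr μ V v) 0 with h | h
          · rw [h, zero_mul, zero_mul]
          · rw [congrArg entD (funext (hach v h))]
      _ = ∑ a, q a * entD (K a) := by
          refine Eq.symm ?_
          calc ∑ a, q a * entD (K a)
              = ∑ a, ∑ v ∈ univ.filter (fun v => xl v.1 = a),
                  pr μ V v * entD (K (xl v.1)) := by
                refine Finset.sum_congr rfl fun a _ => ?_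
                rw [hq a, Finset.sum_mul]
                refine Finset.sum_congr rfl fun v hv => ?_
                simp only [mem_filter, mem_univ, true_and] at hv
                rw [hv]
            _ = ∑ v, pr μ V v * entD (K (xl v.1)) :=
                Finset.sum_fiberwise univ (fun v => xl v.1)
                  (fun v => pr μ V v * entD (K (xl v.1)))
  have hjoint : ∀ a b, pr μ (fun ω => (xl (Xle ω), Yi ω)) (a, b) = q a * K a b := by
    intro a b
    have hpairv : ∀ v, pr μ (fun ω => (Yi ω, V ω)) (b, v) = pr μ V v * K (xl v.1) b := by
      intro v
      rw [pr_pair_eq hμ0 Yi V b v]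
      rcases eq_or_ne (pr μ V v) 0 with h | h
      · rw [h, zero_mul, zero_mul]
      · rw [hach v h b]
    have hcomp := pr_comp (μ := μ) (fun ω => (Yi ω, V ω))
      (fun p : β × (A × (B × (W' × Z'))) => (xl p.2.1, p.1)) (a, b)
    have hshow : pr μ (fun ω => (xl (Xle ω), Yi ω)) (a, b)
        = pr μ (fun ω => ((fun p : β × (A × (B × (W' × Z'))) => (xl p.2.1, p.1))
            ((Yi ω, V ω)))) (a, b) := rfl
    rw [hshow, hcomp, Finset.sum_filter, Fintype.sum_prod_type, Finset.sum_comm]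
    have hinner : ∀ v, (∑ b' : β, if (xl v.1, b') = (a, b)
        then pr μ (fun ω => (Yi ω, V ω)) (b', v) else 0)
        = if xl v.1 = a then pr μ V v * K a b else 0 := by
      intro v
      by_cases hxa : xl v.1 = a
      · rw [if_pos hxa]
        calc (∑ b' : β, if (xl v.1, b') = (a, b)
              then pr μ (fun ω => (Yi ω, V ω)) (b', v) else 0)
            = ∑ b' : β, if b' = b then pr μ (fun ω => (Yi ω, V ω)) (b', v) else 0 := by
              refine Finset.sum_congr rfl fun b' _ => ?_
              exact if_congr (by simp [Prod.ext_iff, hxa]) rfl rfl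
          _ = pr μ (fun ω => (Yi ω, V ω)) (b, v) := by
              rw [Finset.sum_ite_eq' univ b (fun b' => pr μ (fun ω => (Yi ω, V ω)) (b', v))]
              simp
          _ = pr μ V v * K a b := by rw [hpairv v, hxa]
      · rw [if_neg hxa]
        refine Finset.sum_eq_zero fun b' _ => ?_
        rw [if_neg]
        simp [Prod.ext_iff, hxa]
    rw [Finset.sum_congr rfl (fun v _ => hinner v), ← Finset.sum_filter,
      ← Finset.sum_mul, ← hq a]
  have e5 : ent μ Yi = entD (fun b => ∑ a, q a * K a b) := by
    have hYi : ∀ b, pr μ Yi b = ∑ a, q a * K a b := by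
      intro b
      rw [pr_snd (fun ω => xl (Xle ω)) Yi b]
      exact Finset.sum_congr rfl fun a _ => hjoint a b
    exact congrArg entD (funext hYi)
  have e6 := entD_prod_kernel q K hK1
  have e7 : condent μ Yi Ylt ≤ ent μ Yi := condent_le_ent hμ0 hμ1 Yi Ylt
  have hCq := hC q (fun a => pr_nonneg hμ0 _ a) (by rw [hqdef, pr_sum]; exact hμ1)
  rw [e1, e2]
  linarith

end
set_option maxHeartbeats 2000000 in
/-- converse for DMC with noisy feedback: for a memoryless
channel with kernel `K`, single-letter capacity bound `C`, uniform message `W`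
on `Fin M`, deterministic encoder `Xᵢ = fᵢ(W, Zⁱ⁻¹)`, feedback Markov chain
`W − (Yⁱ, Zⁱ⁻¹) − Zᵢ`, and decoder `g`, the error probability
`Pe = Pr(W ≠ g(Yⁿ))` satisfies
`log M ≤ 1 + Pe · log M + n·C − I(Xⁿ → Yⁿ | W)`. -/
theorem stmt10 {Ω : Type*} [Fintype Ω] (μ : Ω → ℝ)
    (hμ0 : ∀ ω, 0 ≤ μ ω) (hμ1 : ∑ ω, μ ω = 1)
    {α β ζ : Type*} [Fintype α] [DecidableEq α] [Fintype β] [DecidableEq β]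
    [Fintype ζ] [DecidableEq ζ]
    {n M : ℕ} (hM : 0 < M)
    (W : Ω → Fin M) (X : Ω → Fin n → α) (Y : Ω → Fin n → β) (Z : Ω → Fin n → ζ)
    (K : α → β → ℝ) (hK0 : ∀ a b, 0 ≤ K a b) (hK1 : ∀ a, ∑ b, K a b = 1)
    (C : ℝ)
    (hC : ∀ q : α → ℝ, (∀ a, 0 ≤ q a) → (∑ a, q a = 1) →
      entD q + entD (fun b => ∑ a, q a * K a b)
        - entD (fun p : α × β => q p.1 * K p.1 p.2) ≤ C)
    (hunif : ∀ w : Fin M, pr μ W w = 1 / M)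
    (henc : ∀ i : Fin n, ∃ g : Fin M × (Fin i.1 → ζ) → α,
      ∀ ω, X ω i = g (W ω, pfx (Z ω) i.1 i.isLt.le))
    (hfb : ∀ i : Fin n,
      condent μ (fun ω => Z ω i)
          (fun ω => (pfx (Y ω) (i.1 + 1) i.isLt, pfx (Z ω) i.1 i.isLt.le, W ω))
      = condent μ (fun ω => Z ω i)
          (fun ω => (pfx (Y ω) (i.1 + 1) i.isLt, pfx (Z ω) i.1 i.isLt.le)))
    (hmem : ∀ i : Fin n, ∀ ω, 0 < μ ω → ∀ b : β,
      condpr μ (fun ω' => Y ω' i)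
        (fun ω' => (pfx (X ω') (i.1 + 1) i.isLt, pfx (Y ω') i.1 i.isLt.le,
          W ω', pfx (Z ω') i.1 i.isLt.le))
        b
        (pfx (X ω) (i.1 + 1) i.isLt, pfx (Y ω) i.1 i.isLt.le,
          W ω, pfx (Z ω) i.1 i.isLt.le)
      = K (X ω i) b)
    (g : (Fin n → β) → Fin M) :
    Real.logb 2 M
      ≤ 1 + (∑ ω ∈ Finset.univ.filter (fun ω => g (Y ω) ≠ W ω), μ ω) * Real.logb 2 M
        + n * C - dirinfoCond μ X Y W := by
  classical
  have hlogM : ent μ W = Real.logb 2 M := ent_unif hM W hunif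
  have hfano := fano hμ0 hμ1 hM W Y g
  -- per-step bound
  have hper : ∀ i : Fin n,
      cmi μ W (fun ω => Y ω i) (fun ω => pfx (Y ω) i.1 i.isLt.le)
        + cmi μ (fun ω => pfx (X ω) (i.1 + 1) i.isLt) (fun ω => Y ω i)
            (fun ω => (pfx (Y ω) i.1 i.isLt.le, W ω)) ≤ C := by
    intro i
    have h := perstep hμ0 hμ1 K hK1 C hC
      (fun ω => Y ω i)
      (fun ω => pfx (X ω) (i.1 + 1) i.isLt)
      (fun ω => pfx (Y ω) i.1 i.isLt.le)
      W
      (fun ω => pfx (Z ω) i.1 i.isLt.le)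
      (fun x => x ⟨i.1, Nat.lt_succ_self i.1⟩)
      (fun ω hω b => hmem i ω hω b)
    exact h
  -- telescoping chain rule : mi μ W Y = ∑ cmi
  set F : ℕ → ℝ := fun k => if h : k ≤ n then condent μ W (fun ω => pfx (Y ω) k h) else 0
    with hFdef
  have hstep : ∀ i : Fin n,
      cmi μ W (fun ω => Y ω i) (fun ω => pfx (Y ω) i.1 i.isLt.le)
        = F i.1 - F (i.1 + 1) := by
    intro i
    have h1 : F i.1 = condent μ W (fun ω => pfx (Y ω) i.1 i.isLt.le) := by
      rw [hFdef]
      exact dif_pos i.isLt.le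
    have h2 : F (i.1 + 1) = condent μ W (fun ω => pfx (Y ω) (i.1 + 1) i.isLt) := by
      rw [hFdef]
      exact dif_pos i.isLt
    rw [cmi_eq, h1, h2]
    congr 1
    refine condent_congr_right (Z := fun ω => pfx (Y ω) (i.1 + 1) i.isLt)
      (fun y : Fin (i.1 + 1) → β => (y (Fin.last i.1), fun j : Fin i.1 => y j.castSucc))
      ?_ ?_
    · intro y1 y2 h
      simp only [Prod.mk.injEq] at h
      funext j
      refine Fin.lastCases ?_ ?_ j
      · exact h.1
      · intro j'
        exact congrFun h.2 j'
    · intro ω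
      refine Prod.ext ?_ (funext fun j => ?_)
      · exact congrArg (Y ω) (Fin.ext rfl)
      · exact congrArg (Y ω) (Fin.ext rfl)
  have hF0 : F 0 = ent μ W := by
    have : F 0 = condent μ W (fun ω => pfx (Y ω) 0 (Nat.zero_le n)) := by
      rw [hFdef]
      exact dif_pos (Nat.zero_le n)
    rw [this]
    unfold condent
    haveI : Subsingleton (Fin 0 → β) := ⟨fun a b => funext fun j => j.elim0⟩
    have h1 : ent μ (fun ω => (W ω, pfx (Y ω) 0 (Nat.zero_le n))) = ent μ W :=
      ent_congr (X := W) (fun w : Fin M => (w, (fun j => j.elim0 : Fin 0 → β)))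
        (fun w1 w2 h => congrArg Prod.fst h)
        (fun ω => Prod.ext rfl (Subsingleton.elim _ _))
    have h2 : ent μ (fun ω => pfx (Y ω) 0 (Nat.zero_le n)) = 0 :=
      ent_subsingleton hμ1 _
    rw [h1, h2, sub_zero]
  have hFn : F n = condent μ W Y := by
    have : F n = condent μ W (fun ω => pfx (Y ω) n le_rfl) := by
      rw [hFdef]
      exact dif_pos le_rfl
    rw [this]
    have hYY : (fun ω => pfx (Y ω) n le_rfl) = Y := by
      funext ω j
      exact congrArg (Y ω) (Fin.ext rfl)
    rw [hYY]
  have hsum : ∑ i : Fin n, cmi μ W (fun ω => Y ω i) (fun ω => pfx (Y ω) i.1 i.isLt.le)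
      = ent μ W - condent μ W Y := by
    rw [Finset.sum_congr rfl fun i _ => hstep i]
    rw [Fin.sum_univ_eq_sum_range (fun k => F k - F (k + 1)) n]
    rw [Finset.sum_range_sub' F n]
    rw [hF0, hFn]
  -- combine
  have hCsum : ∑ i : Fin n,
      (cmi μ W (fun ω => Y ω i) (fun ω => pfx (Y ω) i.1 i.isLt.le)
        + cmi μ (fun ω => pfx (X ω) (i.1 + 1) i.isLt) (fun ω => Y ω i)
            (fun ω => (pfx (Y ω) i.1 i.isLt.le, W ω)))
      ≤ n * C := by
    refine (Finset.sum_le_sum fun i _ => hper i).trans_eq ?_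
    rw [Finset.sum_const, Finset.card_univ, Fintype.card_fin, nsmul_eq_mul]
  have hsplit : ∑ i : Fin n,
      (cmi μ W (fun ω => Y ω i) (fun ω => pfx (Y ω) i.1 i.isLt.le)
        + cmi μ (fun ω => pfx (X ω) (i.1 + 1) i.isLt) (fun ω => Y ω i)
            (fun ω => (pfx (Y ω) i.1 i.isLt.le, W ω)))
      = (ent μ W - condent μ W Y) + dirinfoCond μ X Y W := by
    rw [Finset.sum_add_distrib, hsum]
    rfl
  rw [hsplit] at hCsum
  rw [← hlogM] at hfano ⊢
  linarith

end NFB
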